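/- Under the stated setup with equal eigenvalues λ₁ = λ₂ = λ, 0 < |λ| < 1, one has lim_{h→∞} CV⁺(h)/(h·λʰ)^⟨α−1⟩ = D₉; equivalently, the cross-covariation CV(X₁(t),X₂(t+h)) is asymptotically D₉·(h·λʰ)^⟨α−1⟩ as h → ∞. -/
import Mathlib


open MeasureTheory Filter Topology

/-- The signed power `x^⟨p⟩ = |x|^p · sign x`. -/
noncomputable def spow (x p : ℝ) : ℝ := |x| ^ p * Real.sign x

/-- The unit sphere `S₂ ⊆ ℝ²`. -/
abbrev Sphere2 : Type := {s : ℝ × ℝ // s.1 ^ 2 + s.2 ^ 2 = 1}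

noncomputable def A4 (a1 a2 a3 a4 l : ℝ) (j : ℕ) (s : Sphere2) : ℝ :=
  (j : ℝ) * l ^ ((j : ℤ) - 1) * a3 * s.1.1 + (j : ℝ) * l ^ ((j : ℤ) - 1) * a4 * s.1.2
    - (j : ℝ) * l ^ j * s.1.2 + l ^ j * s.1.2

noncomputable def B4 (a1 a2 a3 a4 l : ℝ) (j : ℕ) (s : Sphere2) : ℝ :=
  l ^ ((j : ℤ) - 1) * a3 * s.1.1 + l ^ ((j : ℤ) - 1) * a4 * s.1.2 - l ^ j * s.1.2

noncomputable def C4 (a1 a2 a3 a4 l : ℝ) (j : ℕ) (s : Sphere2) : ℝ :=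
  (j : ℝ) * l ^ ((j : ℤ) - 1) * a1 * s.1.1 - (j : ℝ) * l ^ j * s.1.1 + l ^ j * s.1.1
    + (j : ℝ) * l ^ ((j : ℤ) - 1) * a2 * s.1.2

/-- The cross-codifference `CD(X₁(t), X₂(t+h))` in the double-eigenvalue case. -/
noncomputable def CDpos' (Γ : Measure Sphere2) (α a1 a2 a3 a4 l : ℝ) (h : ℕ) : ℝ :=
  ∑' j : ℕ, ∫ s,
    (|l ^ h * A4 a1 a2 a3 a4 l j s + (h : ℝ) * l ^ h * B4 a1 a2 a3 a4 l j s| ^ α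
      + |C4 a1 a2 a3 a4 l j s| ^ α
      - |C4 a1 a2 a3 a4 l j s - (l ^ h * A4 a1 a2 a3 a4 l j s + (h : ℝ) * l ^ h * B4 a1 a2 a3 a4 l j s)| ^ α) ∂Γ

/-- The cross-covariation `CV(X₁(t), X₂(t+h))` in the double-eigenvalue case. -/
noncomputable def CVpos' (Γ : Measure Sphere2) (α a1 a2 a3 a4 l : ℝ) (h : ℕ) : ℝ :=
  ∑' j : ℕ, ∫ s,
    C4 a1 a2 a3 a4 l j s * spow (l ^ h * A4 a1 a2 a3 a4 l j s + (h : ℝ) * l ^ h * B4 a1 a2 a3 a4 l j s) (α - 1) ∂Γ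

noncomputable def D6 (Γ : Measure Sphere2) (α a1 a2 a3 a4 l : ℝ) : ℝ :=
  ∑' j : ℕ, ∫ s, B4 a1 a2 a3 a4 l j s * spow (C4 a1 a2 a3 a4 l j s) (α - 1) ∂Γ

noncomputable def D9 (Γ : Measure Sphere2) (α a1 a2 a3 a4 l : ℝ) : ℝ :=
  ∑' j : ℕ, ∫ s, C4 a1 a2 a3 a4 l j s * spow (B4 a1 a2 a3 a4 l j s) (α - 1) ∂Γ

/-! ### Auxiliary lemmas about `spow` -/

lemma spow_zero' (p : ℝ) : spow 0 p = 0 := by simp [spow]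

lemma abs_spow (x p : ℝ) (hp : p ≠ 0) : |spow x p| = |x| ^ p := by
  rcases eq_or_ne x 0 with rfl | hx
  · simp [spow, Real.zero_rpow hp]
  · rw [spow, abs_mul, abs_of_nonneg (Real.rpow_nonneg (abs_nonneg x) p)]
    rcases hx.lt_or_gt with h | h
    · rw [Real.sign_of_neg h]; norm_num
    · rw [Real.sign_of_pos h]; norm_num

lemma sign_mul' (x y : ℝ) : Real.sign (x * y) = Real.sign x * Real.sign y := by
  rcases lt_trichotomy x 0 with hx | rfl | hx
  · rcases lt_trichotomy y 0 with hy | rfl | hy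
    · rw [Real.sign_of_pos (mul_pos_of_neg_of_neg hx hy), Real.sign_of_neg hx,
        Real.sign_of_neg hy]; norm_num
    · simp
    · rw [Real.sign_of_neg (mul_neg_of_neg_of_pos hx hy), Real.sign_of_neg hx,
        Real.sign_of_pos hy]; norm_num
  · simp
  · rcases lt_trichotomy y 0 with hy | rfl | hy
    · rw [Real.sign_of_neg (mul_neg_of_pos_of_neg hx hy), Real.sign_of_pos hx,
        Real.sign_of_neg hy]; norm_num
    · simp
    · rw [Real.sign_of_pos (mul_pos hx hy), Real.sign_of_pos hx, Real.sign_of_pos hy]; norm_num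

lemma spow_mul' (x y p : ℝ) : spow (x * y) p = spow x p * spow y p := by
  unfold spow
  rw [abs_mul, Real.mul_rpow (abs_nonneg x) (abs_nonneg y), sign_mul']
  ring

lemma spow_ne_zero {x : ℝ} (p : ℝ) (hx : x ≠ 0) : spow x p ≠ 0 := by
  unfold spow
  apply mul_ne_zero (Real.rpow_pos_of_pos (abs_pos.mpr hx) p).ne'
  rcases hx.lt_or_gt with h | h
  · rw [Real.sign_of_neg h]; norm_num
  · rw [Real.sign_of_pos h]; norm_num

lemma continuous_spow {p : ℝ} (hp : 0 < p) : Continuous fun x => spow x p := by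
  have habs : Continuous fun y : ℝ => |y| ^ p :=
    continuous_abs.rpow_const fun y => Or.inr hp.le
  rw [continuous_iff_continuousAt]
  intro x
  rcases lt_trichotomy x 0 with hx | rfl | hx
  · refine ContinuousAt.congr (f := fun y : ℝ => |y| ^ p * (-1))
      ((habs.mul continuous_const).continuousAt) ?_
    filter_upwards [Iio_mem_nhds hx] with y hy
    rw [spow, Real.sign_of_neg hy]
  · have h2 : Tendsto (fun y : ℝ => |y| ^ p) (𝓝 0) (𝓝 0) := by
      have h3 := habs.tendsto 0
      simpa [Real.zero_rpow hp.ne'] using h3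
    unfold ContinuousAt
    have h0 : (fun x => spow x p) 0 = 0 := spow_zero' p
    rw [h0]
    exact squeeze_zero_norm
      (fun y => le_of_eq (by rw [Real.norm_eq_abs, abs_spow y p hp.ne'])) h2
  · refine ContinuousAt.congr (f := fun y : ℝ => |y| ^ p * 1)
      ((habs.mul continuous_const).continuousAt) ?_
    filter_upwards [Ioi_mem_nhds hx] with y hy
    rw [spow, Real.sign_of_pos hy]

lemma rpow_le_add_one {x p : ℝ} (hx : 0 ≤ x) (hp0 : 0 ≤ p) (hp1 : p ≤ 1) : x ^ p ≤ x + 1 := by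
  rcases le_total x 1 with h | h
  · calc x ^ p ≤ 1 := Real.rpow_le_one hx h hp0
      _ ≤ x + 1 := by linarith
  · calc x ^ p ≤ x ^ (1:ℝ) := Real.rpow_le_rpow_of_exponent_le h hp1
      _ = x := Real.rpow_one x
      _ ≤ x + 1 := by linarith

instance : BorelSpace Sphere2 := Subtype.borelSpace _

lemma sphere2_abs_fst (s : Sphere2) : |s.1.1| ≤ 1 := by
  have h := s.2
  nlinarith [sq_abs s.1.1, sq_nonneg s.1.2, abs_nonneg s.1.1]

lemma sphere2_abs_snd (s : Sphere2) : |s.1.2| ≤ 1 := by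
  have h := s.2
  nlinarith [sq_abs s.1.2, sq_nonneg s.1.1, abs_nonneg s.1.2]

lemma abs_add4 (t1 t2 t3 t4 : ℝ) : |t1 + t2 - t3 + t4| ≤ |t1| + |t2| + |t3| + |t4| := by
  calc |t1 + t2 - t3 + t4| ≤ |t1 + t2 - t3| + |t4| := abs_add_le _ _
    _ ≤ (|t1 + t2| + |t3|) + |t4| := by gcongr; exact abs_sub _ _
    _ ≤ ((|t1| + |t2|) + |t3|) + |t4| := by gcongr; exact abs_add_le _ _
    _ = |t1| + |t2| + |t3| + |t4| := by ring

set_option maxHeartbeats 2000000 in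
theorem CV_pos_asymptotic_case_III
    (Γ : Measure Sphere2) [IsFiniteMeasure Γ]
    (α a1 a2 a3 a4 l : ℝ) (hα1 : 1 < α) (hα2 : α < 2)
    (hl : l ^ 2 - (a1 + a4) * l + (a1 * a4 - a2 * a3) = 0)
    (hdisc : (a1 - a4) ^ 2 = -(4 * a2 * a3)) (habs : |l| < 1)
    (hl0 : 0 < |l|) :
    Tendsto (fun h : ℕ => CVpos' Γ α a1 a2 a3 a4 l h / spow ((h : ℝ) * l ^ h) (α - 1)) atTop
      (𝓝 (D9 Γ α a1 a2 a3 a4 l)) := by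
  have hl' : l ≠ 0 := abs_pos.mp hl0
  have hp0 : (0:ℝ) < α - 1 := by linarith
  have hp1 : α - 1 ≤ 1 := by linarith
  set r : ℝ := |l| with hrdef
  have hr0 : 0 < r := hl0
  have hr1 : r < 1 := habs
  have hu0 : (0:ℝ) ≤ r⁻¹ := inv_nonneg.mpr hr0.le
  have hu1 : (1:ℝ) ≤ r⁻¹ := by
    have h := mul_inv_cancel₀ (ne_of_gt hr0)
    nlinarith
  set K : ℝ := (|a1| + |a2| + |a3| + |a4| + 2) * r⁻¹ with hKdef
  have hK0 : 0 ≤ K := by positivity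
  set b : ℕ → ℝ := fun j => ((j : ℝ) + 1) * K * r ^ j with hbdef
  have hb0 : ∀ j, 0 ≤ b j := fun j => by positivity
  have hzp : ∀ j : ℕ, |l ^ ((j : ℤ) - 1)| = r ^ j * r⁻¹ := by
    intro j
    rw [zpow_sub₀ hl', zpow_natCast, zpow_one, abs_div, abs_pow, div_eq_mul_inv]
  have hnp : ∀ j : ℕ, |l ^ j| = r ^ j := fun j => abs_pow l j
  have hcoef : ∀ j : ℕ, (j:ℝ) * |a3| + (j:ℝ) * |a4| + (j:ℝ) + 1
      ≤ ((j:ℝ) + 1) * (|a1| + |a2| + |a3| + |a4| + 2) := by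
    intro j
    nlinarith [mul_nonneg (Nat.cast_nonneg (α := ℝ) j) (abs_nonneg a1),
      mul_nonneg (Nat.cast_nonneg (α := ℝ) j) (abs_nonneg a2),
      abs_nonneg a1, abs_nonneg a2, abs_nonneg a3, abs_nonneg a4,
      Nat.cast_nonneg (α := ℝ) j]
  have hcoef' : ∀ j : ℕ, (j:ℝ) * |a1| + (j:ℝ) * |a2| + (j:ℝ) + 1
      ≤ ((j:ℝ) + 1) * (|a1| + |a2| + |a3| + |a4| + 2) := by
    intro j
    nlinarith [mul_nonneg (Nat.cast_nonneg (α := ℝ) j) (abs_nonneg a3),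
      mul_nonneg (Nat.cast_nonneg (α := ℝ) j) (abs_nonneg a4),
      abs_nonneg a1, abs_nonneg a2, abs_nonneg a3, abs_nonneg a4,
      Nat.cast_nonneg (α := ℝ) j]
  have hA : ∀ (j : ℕ) (s : Sphere2), |A4 a1 a2 a3 a4 l j s| ≤ b j := by
    intro j s
    have hs1 := sphere2_abs_fst s
    have hs2 := sphere2_abs_snd s
    have hrj : (0:ℝ) ≤ r ^ j := (pow_pos hr0 j).le
    have hRu : (0:ℝ) ≤ r ^ j * r⁻¹ := by positivity
    have hru : r ^ j ≤ r ^ j * r⁻¹ := by nlinarith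
    have e1 : |(j:ℝ) * l ^ ((j:ℤ) - 1) * a3 * s.1.1|
        = (j:ℝ) * (r ^ j * r⁻¹) * |a3| * |s.1.1| := by
      rw [abs_mul, abs_mul, abs_mul, Nat.abs_cast, hzp j]
    have e2 : |(j:ℝ) * l ^ ((j:ℤ) - 1) * a4 * s.1.2|
        = (j:ℝ) * (r ^ j * r⁻¹) * |a4| * |s.1.2| := by
      rw [abs_mul, abs_mul, abs_mul, Nat.abs_cast, hzp j]
    have e3 : |(j:ℝ) * l ^ j * s.1.2| = (j:ℝ) * r ^ j * |s.1.2| := by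
      rw [abs_mul, abs_mul, Nat.abs_cast, hnp j]
    have e4 : |l ^ j * s.1.2| = r ^ j * |s.1.2| := by rw [abs_mul, hnp j]
    calc |A4 a1 a2 a3 a4 l j s|
        ≤ |(j:ℝ) * l ^ ((j:ℤ) - 1) * a3 * s.1.1| + |(j:ℝ) * l ^ ((j:ℤ) - 1) * a4 * s.1.2|
          + |(j:ℝ) * l ^ j * s.1.2| + |l ^ j * s.1.2| := abs_add4 _ _ _ _
      _ = (j:ℝ) * (r ^ j * r⁻¹) * |a3| * |s.1.1| + (j:ℝ) * (r ^ j * r⁻¹) * |a4| * |s.1.2|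
          + (j:ℝ) * r ^ j * |s.1.2| + r ^ j * |s.1.2| := by rw [e1, e2, e3, e4]
      _ ≤ (j:ℝ) * (r ^ j * r⁻¹) * |a3| * 1 + (j:ℝ) * (r ^ j * r⁻¹) * |a4| * 1
          + (j:ℝ) * r ^ j * 1 + r ^ j * 1 := by gcongr <;> positivity
      _ = (r ^ j * r⁻¹) * ((j:ℝ) * |a3| + (j:ℝ) * |a4|) + ((j:ℝ) + 1) * r ^ j := by ring
      _ ≤ (r ^ j * r⁻¹) * ((j:ℝ) * |a3| + (j:ℝ) * |a4|) + ((j:ℝ) + 1) * (r ^ j * r⁻¹) := by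
          gcongr
      _ = (r ^ j * r⁻¹) * ((j:ℝ) * |a3| + (j:ℝ) * |a4| + (j:ℝ) + 1) := by ring
      _ ≤ (r ^ j * r⁻¹) * (((j:ℝ) + 1) * (|a1| + |a2| + |a3| + |a4| + 2)) :=
          mul_le_mul_of_nonneg_left (hcoef j) hRu
      _ = b j := by simp only [hbdef, hKdef]; ring
  have hB : ∀ (j : ℕ) (s : Sphere2), |B4 a1 a2 a3 a4 l j s| ≤ b j := by
    intro j s
    have hs1 := sphere2_abs_fst s
    have hs2 := sphere2_abs_snd s
    have hrj : (0:ℝ) ≤ r ^ j := (pow_pos hr0 j).le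
    have hRu : (0:ℝ) ≤ r ^ j * r⁻¹ := by positivity
    have hru : r ^ j ≤ r ^ j * r⁻¹ := by nlinarith
    have e1 : |l ^ ((j:ℤ) - 1) * a3 * s.1.1| = (r ^ j * r⁻¹) * |a3| * |s.1.1| := by
      rw [abs_mul, abs_mul, hzp j]
    have e2 : |l ^ ((j:ℤ) - 1) * a4 * s.1.2| = (r ^ j * r⁻¹) * |a4| * |s.1.2| := by
      rw [abs_mul, abs_mul, hzp j]
    have e3 : |l ^ j * s.1.2| = r ^ j * |s.1.2| := by rw [abs_mul, hnp j]
    calc |B4 a1 a2 a3 a4 l j s|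
        ≤ |l ^ ((j:ℤ) - 1) * a3 * s.1.1| + |l ^ ((j:ℤ) - 1) * a4 * s.1.2|
          + |l ^ j * s.1.2| := by
          calc |l ^ ((j:ℤ) - 1) * a3 * s.1.1 + l ^ ((j:ℤ) - 1) * a4 * s.1.2 - l ^ j * s.1.2|
              ≤ |l ^ ((j:ℤ) - 1) * a3 * s.1.1 + l ^ ((j:ℤ) - 1) * a4 * s.1.2|
                + |l ^ j * s.1.2| := abs_sub _ _
            _ ≤ |l ^ ((j:ℤ) - 1) * a3 * s.1.1| + |l ^ ((j:ℤ) - 1) * a4 * s.1.2|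
                + |l ^ j * s.1.2| := by gcongr; exact abs_add_le _ _
      _ = (r ^ j * r⁻¹) * |a3| * |s.1.1| + (r ^ j * r⁻¹) * |a4| * |s.1.2|
          + r ^ j * |s.1.2| := by rw [e1, e2, e3]
      _ ≤ (r ^ j * r⁻¹) * |a3| * 1 + (r ^ j * r⁻¹) * |a4| * 1 + r ^ j * 1 := by
          gcongr <;> positivity
      _ = (r ^ j * r⁻¹) * (|a3| + |a4|) + r ^ j := by ring
      _ ≤ (r ^ j * r⁻¹) * (|a3| + |a4|) + r ^ j * r⁻¹ := by gcongr
      _ = (r ^ j * r⁻¹) * (|a3| + |a4| + 1) := by ring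
      _ ≤ (r ^ j * r⁻¹) * (((j:ℝ) + 1) * (|a1| + |a2| + |a3| + |a4| + 2)) := by
          refine mul_le_mul_of_nonneg_left ?_ hRu
          nlinarith [abs_nonneg a1, abs_nonneg a2, abs_nonneg a3, abs_nonneg a4,
            Nat.cast_nonneg (α := ℝ) j,
            mul_nonneg (Nat.cast_nonneg (α := ℝ) j)
              (by positivity : (0:ℝ) ≤ |a1| + |a2| + |a3| + |a4| + 2)]
      _ = b j := by simp only [hbdef, hKdef]; ring
  have hC : ∀ (j : ℕ) (s : Sphere2), |C4 a1 a2 a3 a4 l j s| ≤ b j := by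
    intro j s
    have hs1 := sphere2_abs_fst s
    have hs2 := sphere2_abs_snd s
    have hrj : (0:ℝ) ≤ r ^ j := (pow_pos hr0 j).le
    have hRu : (0:ℝ) ≤ r ^ j * r⁻¹ := by positivity
    have hru : r ^ j ≤ r ^ j * r⁻¹ := by nlinarith
    have e1 : |(j:ℝ) * l ^ ((j:ℤ) - 1) * a1 * s.1.1|
        = (j:ℝ) * (r ^ j * r⁻¹) * |a1| * |s.1.1| := by
      rw [abs_mul, abs_mul, abs_mul, Nat.abs_cast, hzp j]
    have e2 : |(j:ℝ) * l ^ j * s.1.1| = (j:ℝ) * r ^ j * |s.1.1| := by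
      rw [abs_mul, abs_mul, Nat.abs_cast, hnp j]
    have e3 : |l ^ j * s.1.1| = r ^ j * |s.1.1| := by rw [abs_mul, hnp j]
    have e4 : |(j:ℝ) * l ^ ((j:ℤ) - 1) * a2 * s.1.2|
        = (j:ℝ) * (r ^ j * r⁻¹) * |a2| * |s.1.2| := by
      rw [abs_mul, abs_mul, abs_mul, Nat.abs_cast, hzp j]
    calc |C4 a1 a2 a3 a4 l j s|
        ≤ |(j:ℝ) * l ^ ((j:ℤ) - 1) * a1 * s.1.1| + |(j:ℝ) * l ^ j * s.1.1|
          + |l ^ j * s.1.1| + |(j:ℝ) * l ^ ((j:ℤ) - 1) * a2 * s.1.2| := by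
          have h1 : C4 a1 a2 a3 a4 l j s
              = (j:ℝ) * l ^ ((j:ℤ) - 1) * a1 * s.1.1 + (-((j:ℝ) * l ^ j * s.1.1))
                - (-(l ^ j * s.1.1)) + (j:ℝ) * l ^ ((j:ℤ) - 1) * a2 * s.1.2 := by
            simp only [C4]; ring
          rw [h1]
          refine le_trans (abs_add4 _ _ _ _) ?_
          rw [abs_neg, abs_neg]
      _ = (j:ℝ) * (r ^ j * r⁻¹) * |a1| * |s.1.1| + (j:ℝ) * r ^ j * |s.1.1|
          + r ^ j * |s.1.1| + (j:ℝ) * (r ^ j * r⁻¹) * |a2| * |s.1.2| := by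
          rw [e1, e2, e3, e4]
      _ ≤ (j:ℝ) * (r ^ j * r⁻¹) * |a1| * 1 + (j:ℝ) * r ^ j * 1
          + r ^ j * 1 + (j:ℝ) * (r ^ j * r⁻¹) * |a2| * 1 := by gcongr <;> positivity
      _ = (r ^ j * r⁻¹) * ((j:ℝ) * |a1| + (j:ℝ) * |a2|) + ((j:ℝ) + 1) * r ^ j := by ring
      _ ≤ (r ^ j * r⁻¹) * ((j:ℝ) * |a1| + (j:ℝ) * |a2|) + ((j:ℝ) + 1) * (r ^ j * r⁻¹) := by
          gcongr
      _ = (r ^ j * r⁻¹) * ((j:ℝ) * |a1| + (j:ℝ) * |a2| + (j:ℝ) + 1) := by ring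
      _ ≤ (r ^ j * r⁻¹) * (((j:ℝ) + 1) * (|a1| + |a2| + |a3| + |a4| + 2)) :=
          mul_le_mul_of_nonneg_left (hcoef' j) hRu
      _ = b j := by simp only [hbdef, hKdef]; ring
  -- measure total mass
  set G : ℝ := (Γ Set.univ).toReal with hGdef
  -- continuity of the integrands
  have hcont : ∀ (t : ℝ) (j : ℕ), Continuous fun s : Sphere2 =>
      C4 a1 a2 a3 a4 l j s *
        spow (B4 a1 a2 a3 a4 l j s + A4 a1 a2 a3 a4 l j s * t) (α - 1) := by
    intro t j
    have h1 : Continuous fun s : Sphere2 => C4 a1 a2 a3 a4 l j s := by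
      unfold C4; fun_prop
    have h2 : Continuous fun s : Sphere2 =>
        B4 a1 a2 a3 a4 l j s + A4 a1 a2 a3 a4 l j s * t := by
      unfold A4 B4; fun_prop
    exact h1.mul ((continuous_spow hp0).comp h2)
  -- uniform pointwise bound
  have hbnd : ∀ (t : ℝ), |t| ≤ 1 → ∀ (j : ℕ) (s : Sphere2),
      ‖C4 a1 a2 a3 a4 l j s *
        spow (B4 a1 a2 a3 a4 l j s + A4 a1 a2 a3 a4 l j s * t) (α - 1)‖
        ≤ b j * (2 * b j + 1) := by
    intro t ht j s
    rw [Real.norm_eq_abs, abs_mul, abs_spow _ _ hp0.ne']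
    have hAs := hA j s
    have hBs := hB j s
    have h1 : |B4 a1 a2 a3 a4 l j s + A4 a1 a2 a3 a4 l j s * t| ≤ 2 * b j := by
      calc |B4 a1 a2 a3 a4 l j s + A4 a1 a2 a3 a4 l j s * t|
          ≤ |B4 a1 a2 a3 a4 l j s| + |A4 a1 a2 a3 a4 l j s * t| := abs_add_le _ _
        _ = |B4 a1 a2 a3 a4 l j s| + |A4 a1 a2 a3 a4 l j s| * |t| := by rw [abs_mul]
        _ ≤ b j + b j * 1 := by gcongr
        _ = 2 * b j := by ring
    have h2 : |B4 a1 a2 a3 a4 l j s + A4 a1 a2 a3 a4 l j s * t| ^ (α - 1)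
        ≤ 2 * b j + 1 :=
      le_trans (rpow_le_add_one (abs_nonneg _) hp0.le hp1) (by linarith)
    exact mul_le_mul (hC j s) h2 (Real.rpow_nonneg (abs_nonneg _) _) (hb0 j)
  -- the family of integrals
  set F : ℕ → ℕ → ℝ := fun h j => ∫ s,
      C4 a1 a2 a3 a4 l j s *
        spow (B4 a1 a2 a3 a4 l j s + A4 a1 a2 a3 a4 l j s * ((h:ℝ))⁻¹) (α - 1) ∂Γ
    with hFdef
  have hinvle : ∀ h : ℕ, |((h:ℕ):ℝ)⁻¹| ≤ 1 := by
    intro h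
    rcases Nat.eq_zero_or_pos h with rfl | hh
    · simp
    · have h1 : (1:ℝ) ≤ (h:ℝ) := by exact_mod_cast hh
      have hne : ((h:ℕ):ℝ) ≠ 0 := by linarith
      rw [abs_of_nonneg (by positivity)]
      have := mul_inv_cancel₀ hne
      nlinarith [inv_nonneg.mpr (by linarith : (0:ℝ) ≤ (h:ℝ))]
  -- per-j convergence of the integrals
  have hlim : ∀ j : ℕ, Tendsto (fun h : ℕ => F h j) atTop
      (𝓝 (∫ s, C4 a1 a2 a3 a4 l j s * spow (B4 a1 a2 a3 a4 l j s) (α - 1) ∂Γ)) := by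
    intro j
    apply tendsto_integral_filter_of_dominated_convergence
      (bound := fun _ => b j * (2 * b j + 1))
    · exact Eventually.of_forall fun h => (hcont _ j).aestronglyMeasurable
    · exact Eventually.of_forall fun h => ae_of_all _ fun s => hbnd _ (hinvle h) j s
    · exact integrable_const _
    · refine ae_of_all _ fun s => ?_
      have h0 : Tendsto (fun h : ℕ => ((h:ℝ))⁻¹) atTop (𝓝 0) :=
        tendsto_inv_atTop_zero.comp tendsto_natCast_atTop_atTop
      have hinner : Tendsto (fun h : ℕ =>
          B4 a1 a2 a3 a4 l j s + A4 a1 a2 a3 a4 l j s * ((h:ℝ))⁻¹) atTop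
          (𝓝 (B4 a1 a2 a3 a4 l j s)) := by
        have h3 := tendsto_const_nhds (α := ℕ)
          (x := B4 a1 a2 a3 a4 l j s) (f := atTop) |>.add
          ((tendsto_const_nhds (α := ℕ) (x := A4 a1 a2 a3 a4 l j s) (f := atTop)).mul h0)
        simpa using h3
      exact tendsto_const_nhds.mul (((continuous_spow hp0).tendsto _).comp hinner)
  -- uniform bound on the integrals
  have hFbound : ∀ (h : ℕ) (j : ℕ), ‖F h j‖ ≤ b j * (2 * b j + 1) * G := by
    intro h j
    refine le_trans (norm_integral_le_of_norm_le_const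
      (ae_of_all _ fun s => hbnd _ (hinvle h) j s)) ?_
    exact le_of_eq rfl
  -- summability of the bound
  have hr2 : ‖r ^ 2‖ < 1 := by
    rw [Real.norm_eq_abs, abs_of_nonneg (by positivity)]
    nlinarith
  have hrn : ‖r‖ < 1 := by rw [Real.norm_eq_abs, abs_of_nonneg hr0.le]; exact hr1
  have s2 : Summable fun n : ℕ => (n:ℝ) ^ 2 * (r ^ 2) ^ n :=
    summable_pow_mul_geometric_of_norm_lt_one 2 hr2
  have s1 : Summable fun n : ℕ => (n:ℝ) ^ 1 * (r ^ 2) ^ n :=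
    summable_pow_mul_geometric_of_norm_lt_one 1 hr2
  have s0 : Summable fun n : ℕ => (r ^ 2) ^ n := summable_geometric_of_norm_lt_one hr2
  have t2 : Summable fun n : ℕ => ((n:ℝ) + 1) ^ 2 * (r ^ 2) ^ n := by
    refine ((s2.add (s1.mul_left 2)).add s0).congr fun n => ?_
    ring
  have s1' : Summable fun n : ℕ => (n:ℝ) ^ 1 * r ^ n :=
    summable_pow_mul_geometric_of_norm_lt_one 1 hrn
  have s0' : Summable fun n : ℕ => r ^ n := summable_geometric_of_norm_lt_one hrn
  have t1 : Summable fun n : ℕ => ((n:ℝ) + 1) * r ^ n := by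
    refine (s1'.add s0').congr fun n => ?_
    ring
  have hsum : Summable fun j : ℕ => b j * (2 * b j + 1) * G := by
    refine ((t2.mul_left (2 * K ^ 2 * G)).add (t1.mul_left (K * G))).congr fun j => ?_
    simp only [hbdef]
    ring
  -- convergence of the sums
  have hstep2 : Tendsto (fun h : ℕ => ∑' j : ℕ, F h j) atTop
      (𝓝 (D9 Γ α a1 a2 a3 a4 l)) := by
    have hD9 : D9 Γ α a1 a2 a3 a4 l
        = ∑' j : ℕ, ∫ s, C4 a1 a2 a3 a4 l j s * spow (B4 a1 a2 a3 a4 l j s) (α - 1) ∂Γ := rfl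
    rw [hD9]
    exact tendsto_tsum_of_dominated_convergence hsum hlim (Eventually.of_forall hFbound)
  -- eventual equality with the normalized cross-covariation
  have heq : (fun h : ℕ => ∑' j : ℕ, F h j) =ᶠ[atTop]
      fun h : ℕ => CVpos' Γ α a1 a2 a3 a4 l h / spow ((h:ℝ) * l ^ h) (α - 1) := by
    filter_upwards [eventually_ge_atTop 1] with h hh
    have hh0 : ((h:ℕ):ℝ) ≠ 0 := Nat.cast_ne_zero.mpr (by omega)
    have hc0 : (h:ℝ) * l ^ h ≠ 0 := mul_ne_zero hh0 (pow_ne_zero _ hl')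
    have hcs : spow ((h:ℝ) * l ^ h) (α - 1) ≠ 0 := spow_ne_zero _ hc0
    symm
    simp only [CVpos']
    rw [← tsum_div_const]
    refine tsum_congr fun j => ?_
    rw [← integral_div]
    refine integral_congr_ae (ae_of_all _ fun s => ?_)
    dsimp only
    have hX : l ^ h * A4 a1 a2 a3 a4 l j s + (h:ℝ) * l ^ h * B4 a1 a2 a3 a4 l j s
        = ((h:ℝ) * l ^ h) *
          (B4 a1 a2 a3 a4 l j s + A4 a1 a2 a3 a4 l j s * ((h:ℝ))⁻¹) := by
      field_simp
      ring
    rw [hX, spow_mul', mul_comm (spow ((h:ℝ) * l ^ h) (α - 1)) _, ← mul_assoc,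
      mul_div_assoc, div_self hcs, mul_one]
  exact Tendsto.congr' heq hstep2
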